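/- arXiv:math/0410232 — 4 statements merged into one kernel-verified Lean document; each statement's English description precedes it below -/
import Mathlib

section
/- Let (g, J, ω) be a Kähler Lie algebra and let h ⊆ g be an ideal that is ω-isotropic (ω(x,y) = 0 for all x, y ∈ h). Then: (1) h is an abelian ideal; (2) J(h) is an ω-isotropic Lie subalgebra of g; (3) h + J(h) is a Lie subalgebra of g; (4) h ∩ J(h) is an ideal of the Lie algebra h + J(h) that is invariant under J. Moreover, if h is ω-lagrangian (ω-isotropic and every y with ω(h, y) = 0 lies in h), then J(h) is ω-lagrangian. -/
/-!
Closedness of ω gives `ω([x,y],z) = -ω([y,z],x) - ω([z,x],y)`, and both terms vanish when `h` is an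
isotropic ideal containing `x` and `y`, so `[x,y] = 0` by nondegeneracy. On the abelian ideal `h`
the vanishing of the Nijenhuis tensor reads `[Ja,Jb] = J([Ja,b] + [a,Jb])`, and the right-hand side
lies in `J(h)` because `h` is an ideal; everything else is linear algebra of `J² = -1` and the
`J`-invariance of `ω`.
-/

section KahlerDefs

variable {L : Type*} [LieRing L] [LieAlgebra ℝ L]

def IsComplexStructure (J : Module.End ℝ L) : Prop :=
  (∀ x, J (J x) = -x) ∧
  ∀ x y : L, ⁅J x, J y⁆ - ⁅x, y⁆ - J ⁅J x, y⁆ - J ⁅x, J y⁆ = 0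

def IsSymplecticForm (ω : L →ₗ[ℝ] L →ₗ[ℝ] ℝ) : Prop :=
  (∀ x, ω x x = 0) ∧
  (∀ x, (∀ y, ω x y = 0) → x = 0) ∧
  ∀ x y z : L, ω ⁅x, y⁆ z + ω ⁅y, z⁆ x + ω ⁅z, x⁆ y = 0

def IsKahlerStructure (J : Module.End ℝ L) (ω : L →ₗ[ℝ] L →ₗ[ℝ] ℝ) : Prop :=
  IsComplexStructure J ∧ IsSymplecticForm ω ∧ ∀ x y : L, ω (J x) (J y) = ω x y

def IsLeviCivita (J : Module.End ℝ L) (ω : L →ₗ[ℝ] L →ₗ[ℝ] ℝ)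
    (D : L →ₗ[ℝ] L →ₗ[ℝ] L) : Prop :=
  ∀ x y z : L,
    2 * ω (J (D x y)) z = ω (J ⁅x, y⁆) z - ω (J ⁅y, z⁆) x + ω (J ⁅z, x⁆) y

noncomputable def ricci (D : L →ₗ[ℝ] L →ₗ[ℝ] L) (x y : L) : ℝ :=
  - LinearMap.trace ℝ L
      ((D x) ∘ₗ (D.flip y) - D.flip (D x y) - (D.flip y) ∘ₗ (LieAlgebra.ad ℝ L x))

def IsFlat (D : L →ₗ[ℝ] L →ₗ[ℝ] L) : Prop :=
  ∀ x y z : L, D x (D y z) - D y (D x z) - D ⁅x, y⁆ z = 0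

end KahlerDefs

section Models

variable (M : Type*) [LieRing M] [LieAlgebra ℝ M]

def IsRxH3 : Prop :=
  ∃ b : Module.Basis (Fin 4) ℝ M,
    ⁅b 0, b 1⁆ = b 2 ∧ ⁅b 0, b 2⁆ = 0 ∧ ⁅b 0, b 3⁆ = 0 ∧
    ⁅b 1, b 2⁆ = 0 ∧ ⁅b 1, b 3⁆ = 0 ∧ ⁅b 2, b 3⁆ = 0

def IsR2xAffR : Prop :=
  ∃ b : Module.Basis (Fin 4) ℝ M,
    ⁅b 0, b 1⁆ = b 1 ∧ ⁅b 0, b 2⁆ = 0 ∧ ⁅b 0, b 3⁆ = 0 ∧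
    ⁅b 1, b 2⁆ = 0 ∧ ⁅b 1, b 3⁆ = 0 ∧ ⁅b 2, b 3⁆ = 0

def IsRxE2 : Prop :=
  ∃ b : Module.Basis (Fin 4) ℝ M,
    ⁅b 0, b 1⁆ = -b 2 ∧ ⁅b 0, b 2⁆ = b 1 ∧ ⁅b 0, b 3⁆ = 0 ∧
    ⁅b 1, b 2⁆ = 0 ∧ ⁅b 1, b 3⁆ = 0 ∧ ⁅b 2, b 3⁆ = 0

def IsAffRxAffR : Prop :=
  ∃ b : Module.Basis (Fin 4) ℝ M,
    ⁅b 0, b 1⁆ = b 1 ∧ ⁅b 0, b 2⁆ = 0 ∧ ⁅b 0, b 3⁆ = 0 ∧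
    ⁅b 1, b 2⁆ = 0 ∧ ⁅b 1, b 3⁆ = 0 ∧ ⁅b 2, b 3⁆ = b 3

def IsAffC : Prop :=
  ∃ b : Module.Basis (Fin 4) ℝ M,
    ⁅b 0, b 1⁆ = 0 ∧ ⁅b 0, b 2⁆ = b 2 ∧ ⁅b 0, b 3⁆ = b 3 ∧
    ⁅b 1, b 2⁆ = b 3 ∧ ⁅b 1, b 3⁆ = -b 2 ∧ ⁅b 2, b 3⁆ = 0

def IsR4m1m1 : Prop :=
  ∃ b : Module.Basis (Fin 4) ℝ M,
    ⁅b 3, b 0⁆ = b 0 ∧ ⁅b 3, b 1⁆ = -b 1 ∧ ⁅b 3, b 2⁆ = -b 2 ∧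
    ⁅b 0, b 1⁆ = 0 ∧ ⁅b 0, b 2⁆ = 0 ∧ ⁅b 1, b 2⁆ = 0

def IsR4'0 (δ : ℝ) : Prop :=
  ∃ b : Module.Basis (Fin 4) ℝ M,
    ⁅b 3, b 0⁆ = b 0 ∧ ⁅b 3, b 1⁆ = -(δ • b 2) ∧ ⁅b 3, b 2⁆ = δ • b 1 ∧
    ⁅b 0, b 1⁆ = 0 ∧ ⁅b 0, b 2⁆ = 0 ∧ ⁅b 1, b 2⁆ = 0

def IsD4 (lam : ℝ) : Prop :=
  ∃ b : Module.Basis (Fin 4) ℝ M,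
    ⁅b 0, b 1⁆ = b 2 ∧ ⁅b 3, b 0⁆ = lam • b 0 ∧ ⁅b 3, b 1⁆ = (1 - lam) • b 1 ∧
    ⁅b 3, b 2⁆ = b 2 ∧ ⁅b 0, b 2⁆ = 0 ∧ ⁅b 1, b 2⁆ = 0

def IsD4' (δ : ℝ) : Prop :=
  ∃ b : Module.Basis (Fin 4) ℝ M,
    ⁅b 0, b 1⁆ = b 2 ∧ ⁅b 3, b 0⁆ = (δ / 2) • b 0 - b 1 ∧
    ⁅b 3, b 1⁆ = b 0 + (δ / 2) • b 1 ∧ ⁅b 3, b 2⁆ = δ • b 2 ∧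
    ⁅b 0, b 2⁆ = 0 ∧ ⁅b 1, b 2⁆ = 0

end Models

section LieSubmodules

variable {R L : Type*} [CommRing R] [LieRing L] [LieAlgebra R L] {h k : Submodule R L}

theorem lie_mem_of_left_mem (hideal : ∀ x : L, ∀ y ∈ h, ⁅x, y⁆ ∈ h) {x : L} (hx : x ∈ h)
    (y : L) : ⁅x, y⁆ ∈ h := by
  rw [← lie_skew]
  exact h.neg_mem (hideal y x hx)

theorem lie_mem_sup_of_ideal_of_subalgebra (hideal : ∀ x : L, ∀ y ∈ h, ⁅x, y⁆ ∈ h)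
    (hk : ∀ x ∈ k, ∀ y ∈ k, ⁅x, y⁆ ∈ k) : ∀ x ∈ h ⊔ k, ∀ y ∈ h ⊔ k, ⁅x, y⁆ ∈ h ⊔ k := by
  intro x hx y hy
  obtain ⟨a, ha, c, hc, rfl⟩ := Submodule.mem_sup.mp hx
  obtain ⟨b, hb, d, hd, rfl⟩ := Submodule.mem_sup.mp hy
  rw [add_lie, lie_add, lie_add]
  exact add_mem (add_mem (Submodule.mem_sup_left (hideal a b hb))
      (Submodule.mem_sup_left (lie_mem_of_left_mem hideal ha d)))
    (add_mem (Submodule.mem_sup_left (hideal c b hb)) (Submodule.mem_sup_right (hk c hc d hd)))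

theorem lie_mem_inf_of_abelian_ideal_of_subalgebra (hideal : ∀ x : L, ∀ y ∈ h, ⁅x, y⁆ ∈ h)
    (habel : ∀ x ∈ h, ∀ y ∈ h, ⁅x, y⁆ = 0) (hk : ∀ x ∈ k, ∀ y ∈ k, ⁅x, y⁆ ∈ k) :
    ∀ x ∈ h ⊔ k, ∀ y ∈ h ⊓ k, ⁅x, y⁆ ∈ h ⊓ k := by
  intro x hx y hy
  obtain ⟨hyh, hyk⟩ := Submodule.mem_inf.mp hy
  obtain ⟨a, ha, c, hc, rfl⟩ := Submodule.mem_sup.mp hx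
  refine Submodule.mem_inf.mpr ⟨hideal _ y hyh, ?_⟩
  rw [add_lie, habel a ha y hyh, zero_add]
  exact hk c hc y hyk

end LieSubmodules

section ComplexLinearAlgebra

variable {R M : Type*} [CommRing R] [AddCommGroup M] [Module R M] {J : Module.End R M}
  {h : Submodule R M}

theorem apply_mem_inf_map (hJ2 : ∀ x, J (J x) = -x) {y : M} (hy : y ∈ h ⊓ h.map J) :
    J y ∈ h ⊓ h.map J := by
  obtain ⟨hyh, w, hw, rfl⟩ := Submodule.mem_inf.mp hy
  rw [hJ2]
  exact Submodule.mem_inf.mpr ⟨h.neg_mem hw, J w, hyh, hJ2 w⟩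

variable {ω : M →ₗ[R] M →ₗ[R] R}

theorem isotropic_map (hcomp : ∀ x y, ω (J x) (J y) = ω x y)
    (hiso : ∀ x ∈ h, ∀ y ∈ h, ω x y = 0) : ∀ x ∈ h.map J, ∀ y ∈ h.map J, ω x y = 0 := by
  rintro _ ⟨a, ha, rfl⟩ _ ⟨b, hb, rfl⟩
  rw [hcomp]
  exact hiso a ha b hb

theorem mem_map_of_lagrangian (hJ2 : ∀ x, J (J x) = -x) (hcomp : ∀ x y, ω (J x) (J y) = ω x y)
    (hlag : ∀ y : M, (∀ x ∈ h, ω x y = 0) → y ∈ h) {y : M}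
    (hy : ∀ x ∈ h.map J, ω x y = 0) : y ∈ h.map J := by
  have hJy : J y ∈ h := hlag (J y) fun x hx => by
    rw [← hcomp, hJ2, map_neg, hy (J x) ⟨x, hx, rfl⟩, neg_zero]
  exact ⟨-J y, h.neg_mem hJy, by rw [map_neg, hJ2, neg_neg]⟩

end ComplexLinearAlgebra

section Kahler

variable {L : Type*} [LieRing L] [LieAlgebra ℝ L] {h : Submodule ℝ L}

theorem IsSymplecticForm.lie_eq_zero_of_isotropic_ideal {ω : L →ₗ[ℝ] L →ₗ[ℝ] ℝ}
    (hω : IsSymplecticForm ω) (hideal : ∀ x : L, ∀ y ∈ h, ⁅x, y⁆ ∈ h)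
    (hiso : ∀ x ∈ h, ∀ y ∈ h, ω x y = 0) : ∀ x ∈ h, ∀ y ∈ h, ⁅x, y⁆ = 0 := by
  intro x hx y hy
  refine hω.2.1 _ fun z => ?_
  have hyzx : ω ⁅y, z⁆ x = 0 := hiso _ (lie_mem_of_left_mem hideal hy z) x hx
  have hzxy : ω ⁅z, x⁆ y = 0 := hiso _ (hideal z x hx) y hy
  linarith [hω.2.2 x y z]

theorem IsComplexStructure.lie_apply_apply_of_lie_eq_zero {J : Module.End ℝ L}
    (hJ : IsComplexStructure J) {a b : L} (hab : ⁅a, b⁆ = 0) :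
    ⁅J a, J b⁆ = J (⁅J a, b⁆ + ⁅a, J b⁆) := by
  have hN := hJ.2 a b
  rwa [hab, sub_zero, sub_sub, sub_eq_zero, ← map_add] at hN

theorem IsComplexStructure.lie_mem_map_of_abelian_ideal {J : Module.End ℝ L}
    (hJ : IsComplexStructure J) (hideal : ∀ x : L, ∀ y ∈ h, ⁅x, y⁆ ∈ h)
    (habel : ∀ x ∈ h, ∀ y ∈ h, ⁅x, y⁆ = 0) : ∀ x ∈ h.map J, ∀ y ∈ h.map J, ⁅x, y⁆ ∈ h.map J := by
  rintro _ ⟨a, ha, rfl⟩ _ ⟨b, hb, rfl⟩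
  rw [hJ.lie_apply_apply_of_lie_eq_zero (habel a ha b hb)]
  exact ⟨_, h.add_mem (hideal _ b hb) (lie_mem_of_left_mem hideal ha _), rfl⟩

end Kahler

theorem isotropic_ideal_structure_general
    {L : Type*} [LieRing L] [LieAlgebra ℝ L]
    (J : Module.End ℝ L) (ω : L →ₗ[ℝ] L →ₗ[ℝ] ℝ)
    (hK : IsKahlerStructure J ω)
    (h : Submodule ℝ L) (hideal : ∀ x : L, ∀ y ∈ h, ⁅x, y⁆ ∈ h)
    (hiso : ∀ x ∈ h, ∀ y ∈ h, ω x y = 0) :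
    (∀ x ∈ h, ∀ y ∈ h, ⁅x, y⁆ = (0 : L)) ∧
    (∀ x ∈ Submodule.map J h, ∀ y ∈ Submodule.map J h,
        ω x y = 0 ∧ ⁅x, y⁆ ∈ Submodule.map J h) ∧
    (∀ x ∈ h ⊔ Submodule.map J h, ∀ y ∈ h ⊔ Submodule.map J h,
        ⁅x, y⁆ ∈ h ⊔ Submodule.map J h) ∧
    (∀ x ∈ h ⊔ Submodule.map J h, ∀ y ∈ h ⊓ Submodule.map J h,
        ⁅x, y⁆ ∈ h ⊓ Submodule.map J h) ∧
    (∀ y ∈ h ⊓ Submodule.map J h, J y ∈ h ⊓ Submodule.map J h) ∧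
    ((∀ y : L, (∀ x ∈ h, ω x y = 0) → y ∈ h) →
      ∀ y : L, (∀ x ∈ Submodule.map J h, ω x y = 0) → y ∈ Submodule.map J h) := by
  obtain ⟨hJ, hω, hcomp⟩ := hK
  have habel := hω.lie_eq_zero_of_isotropic_ideal hideal hiso
  have hsub := hJ.lie_mem_map_of_abelian_ideal hideal habel
  exact ⟨habel, fun x hx y hy => ⟨isotropic_map hcomp hiso x hx y hy, hsub x hx y hy⟩,
    lie_mem_sup_of_ideal_of_subalgebra hideal hsub,
    lie_mem_inf_of_abelian_ideal_of_subalgebra hideal habel hsub,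
    fun _ => apply_mem_inf_map hJ.1,
    fun hlag _ => mem_map_of_lagrangian hJ.1 hcomp hlag⟩

/-- In a Kähler Lie algebra, an ω-isotropic ideal h is abelian, J(h) is an
ω-isotropic subalgebra, h + J(h) is a subalgebra, h ⊓ J(h) is a J-invariant ideal of
h + J(h), and if h is ω-lagrangian then J(h) is ω-lagrangian. -/
theorem isotropic_ideal_structure
    {L : Type*} [LieRing L] [LieAlgebra ℝ L] [Module.Finite ℝ L]
    (J : Module.End ℝ L) (ω : L →ₗ[ℝ] L →ₗ[ℝ] ℝ)
    (hK : IsKahlerStructure J ω)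
    (h : Submodule ℝ L) (hideal : ∀ x : L, ∀ y ∈ h, ⁅x, y⁆ ∈ h)
    (hiso : ∀ x ∈ h, ∀ y ∈ h, ω x y = 0) :
    (∀ x ∈ h, ∀ y ∈ h, ⁅x, y⁆ = (0 : L)) ∧
    (∀ x ∈ Submodule.map J h, ∀ y ∈ Submodule.map J h,
        ω x y = 0 ∧ ⁅x, y⁆ ∈ Submodule.map J h) ∧
    (∀ x ∈ h ⊔ Submodule.map J h, ∀ y ∈ h ⊔ Submodule.map J h,
        ⁅x, y⁆ ∈ h ⊔ Submodule.map J h) ∧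
    (∀ x ∈ h ⊔ Submodule.map J h, ∀ y ∈ h ⊓ Submodule.map J h,
        ⁅x, y⁆ ∈ h ⊓ Submodule.map J h) ∧
    (∀ y ∈ h ⊓ Submodule.map J h, J y ∈ h ⊓ Submodule.map J h) ∧
    ((∀ y : L, (∀ x ∈ h, ω x y = 0) → y ∈ h) →
      ∀ y : L, (∀ x ∈ Submodule.map J h, ω x y = 0) → y ∈ Submodule.map J h) :=
  isotropic_ideal_structure_general J ω hK h hideal hiso
end

section
/- Let g be a non-abelian nilpotent four-dimensional real Lie algebra admitting a Kähler structure (J, ω). Then g is isomorphic, as a real Lie algebra, to ℝ×h₃, and the complex structure J is abelian, i.e. [Jx,Jy] = [x,y] for all x, y ∈ g. -/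
/-!
The Nijenhuis condition with a central `z` says that `ad (J z)` commutes with `J`, i.e. is
complex linear on `L ≅ ℂ²`; a nonzero nilpotent complex linear endomorphism of `ℂ²` has its
kernel inside its range, so `J z = ⁅J z, v⁆` for some `v`, which nilpotency forbids. Hence the
center is a nonzero, proper, `J`-invariant subspace, so for `u` outside it `u, J u` span `L`
modulo the center, every bracket is a multiple of `c = ⁅u, J u⁆`, and nilpotency makes `c`
central. Then `u, J u, c, J c` is a basis exhibiting `ℝ × 𝔥₃`, and since `[L, L] = ℝ c` and
`J c ∉ ℝ c`, the Nijenhuis condition splits into `⁅J x, J y⁆ = ⁅x, y⁆`.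
-/

section ComplexStructure

open Module LinearMap

variable {V : Type*} [AddCommGroup V] [Module ℝ V] {J : End ℝ V}

theorem eq_zero_of_smul_add_smul_apply_mem (hJ : ∀ x, J (J x) = -x) {P : Submodule ℝ V}
    (hP : P ∈ J.invtSubmodule) {u : V} (hu : u ∉ P) {s t : ℝ} (h : s • u + t • J u ∈ P) :
    s = 0 ∧ t = 0 := by
  have hJ' : s • J u - t • u ∈ P := by
    simpa [hJ, sub_eq_add_neg, add_comm] using hP h
  have key : (s * s + t * t) • u ∈ P := by
    convert P.sub_mem (P.smul_mem s h) (P.smul_mem t hJ') using 1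
    module
  by_contra hst
  have hne : s * s + t * t ≠ 0 := fun h0 => hst ⟨by nlinarith, by nlinarith⟩
  exact hu ((P.smul_mem_iff hne).1 key)

theorem linearIndependent_pair_apply (hJ : ∀ x, J (J x) = -x) {x : V} (hx : x ≠ 0) :
    LinearIndependent ℝ ![x, J x] :=
  LinearIndependent.pair_iff.2 fun _ _ h =>
    eq_zero_of_smul_add_smul_apply_mem hJ (End.invtSubmodule.bot_mem J) (by simpa)
      (by simp [h])

theorem two_le_finrank_of_mem_invtSubmodule [FiniteDimensional ℝ V] (hJ : ∀ x, J (J x) = -x)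
    {W : Submodule ℝ V} (hW : W ∈ J.invtSubmodule) (hW0 : W ≠ ⊥) : 2 ≤ finrank ℝ W := by
  obtain ⟨x, hxW, hx0⟩ := W.exists_mem_ne_zero_of_ne_bot hW0
  have hJx : J x ∈ W := hW hxW
  calc 2 = finrank ℝ (Submodule.span ℝ (Set.range ![x, J x])) :=
        by simp [finrank_span_eq_card (linearIndependent_pair_apply hJ hx0)]
    _ ≤ finrank ℝ W := Submodule.finrank_mono <| Submodule.span_le.2 <| by
        simp [Set.insert_subset_iff, hxW, hJx]

theorem linearIndependent_of_mem_invtSubmodule (hJ : ∀ x, J (J x) = -x) {P : Submodule ℝ V}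
    (hP : P ∈ J.invtSubmodule) {x u : V} (hx : x ∈ P) (hx0 : x ≠ 0) (hu : u ∉ P) :
    LinearIndependent ℝ ![u, J u, x, J x] := by
  rw [Fintype.linearIndependent_iff]
  intro g hg
  simp only [Fin.sum_univ_four, Matrix.cons_val] at hg
  have hmem : g 0 • u + g 1 • J u ∈ P := by
    rw [show g 0 • u + g 1 • J u = -(g 2 • x + g 3 • J x) by
      linear_combination (norm := module) hg]
    exact P.neg_mem (P.add_mem (P.smul_mem _ hx) (P.smul_mem _ (hP hx)))
  obtain ⟨h0, h1⟩ := eq_zero_of_smul_add_smul_apply_mem hJ hP hu hmem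
  obtain ⟨h2, h3⟩ := LinearIndependent.pair_iff.1 (linearIndependent_pair_apply hJ hx0) (g 2) (g 3)
    (by simpa [h0, h1] using hg)
  intro i
  fin_cases i <;> assumption

theorem exists_basis_of_mem_invtSubmodule (hdim : finrank ℝ V = 4) (hJ : ∀ x, J (J x) = -x)
    {P : Submodule ℝ V} (hP : P ∈ J.invtSubmodule) {x u : V} (hx : x ∈ P) (hx0 : x ≠ 0)
    (hu : u ∉ P) : ∃ b : Basis (Fin 4) ℝ V, ⇑b = ![u, J u, x, J x] :=
  have : FiniteDimensional ℝ V := Module.finite_of_finrank_pos (by omega)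
  ⟨basisOfLinearIndependentOfCardEqFinrank
      (linearIndependent_of_mem_invtSubmodule hJ hP hx hx0 hu) (by simp [hdim]),
    coe_basisOfLinearIndependentOfCardEqFinrank _ _⟩

theorem exists_sub_smul_add_smul_mem (hdim : finrank ℝ V = 4) (hJ : ∀ x, J (J x) = -x)
    {P : Submodule ℝ V} (hP : P ∈ J.invtSubmodule) (hP0 : P ≠ ⊥) {u : V} (hu : u ∉ P) (x : V) :
    ∃ s t : ℝ, x - (s • u + t • J u) ∈ P := by
  obtain ⟨z, hz, hz0⟩ := P.exists_mem_ne_zero_of_ne_bot hP0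
  obtain ⟨b, hb⟩ := exists_basis_of_mem_invtSubmodule hdim hJ hP hz hz0 hu
  refine ⟨b.repr x 0, b.repr x 1, ?_⟩
  have hx := b.sum_repr x
  simp only [Fin.sum_univ_four, hb, Matrix.cons_val] at hx
  rw [show x - (b.repr x 0 • u + b.repr x 1 • J u) = b.repr x 2 • z + b.repr x 3 • J z by
    nth_rw 1 [← hx]; abel]
  exact P.add_mem (P.smul_mem _ hz) (P.smul_mem _ (hP hz))

end ComplexStructure

section Nilpotent

open Module LinearMap

theorem Module.End.range_inf_ker_ne_bot_of_isNilpotent {R M : Type*} [Semiring R]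
    [AddCommMonoid M] [Module R M]
    {f : End R M} (hf : IsNilpotent f) (hf0 : f ≠ 0) : range f ⊓ ker f ≠ ⊥ := by
  obtain ⟨n, hn⟩ := hf
  contrapose! hf0
  have hpow_pred (k : ℕ) (hk : f ^ (k + 2) = 0) : f ^ (k + 1) = 0 := by
    ext y
    have hmem : (f ^ (k + 1)) y ∈ range f ⊓ ker f :=
      ⟨⟨(f ^ k) y, by rw [pow_succ', End.mul_apply]⟩, show f ((f ^ (k + 1)) y) = 0 by
        rw [← End.mul_apply, ← pow_succ', hk, LinearMap.zero_apply]⟩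
    simpa [hf0] using hmem
  have (k : ℕ) : f ^ (k + 1) = 0 → f = 0 := by
    induction k with
    | zero => simp
    | succ k ih => exact fun h => ih (hpow_pred k h)
  exact this n (by rw [pow_succ, hn, zero_mul])

theorem ker_le_range_of_isNilpotent_of_commute {V : Type*} [AddCommGroup V] [Module ℝ V]
    {J : End ℝ V} (hdim : finrank ℝ V = 4) (hJ : ∀ x, J (J x) = -x) {f : End ℝ V}
    (hf : IsNilpotent f) (hf0 : f ≠ 0) (hfJ : Commute f J) : ker f ≤ range f := by
  have : FiniteDimensional ℝ V := Module.finite_of_finrank_pos (by omega)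
  have hK : ker f ∈ J.invtSubmodule := fun x (hx : f x = 0) => show f (J x) = 0 by
    rw [← End.mul_apply, hfJ.eq, End.mul_apply, hx, map_zero]
  have hR : range f ∈ J.invtSubmodule := by
    rintro _ ⟨y, rfl⟩
    exact ⟨J y, by rw [← End.mul_apply, hfJ.eq, End.mul_apply]⟩
  have hR2 := two_le_finrank_of_mem_invtSubmodule hJ hR (range_eq_bot.not.2 hf0)
  have hRK2 := two_le_finrank_of_mem_invtSubmodule hJ (End.invtSubmodule.inf_mem hR hK)
    (End.range_inf_ker_ne_bot_of_isNilpotent hf hf0)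
  have hrank := f.finrank_range_add_finrank_ker
  have hRK : range f ⊓ ker f = ker f :=
    Submodule.eq_of_le_of_finrank_le inf_le_right (by omega)
  exact hRK ▸ inf_le_left

end Nilpotent

section LieAlgebra

open LieAlgebra LieModule

variable {L : Type*} [LieRing L]

theorem LieAlgebra.eq_zero_of_lie_eq_smul {K : Type*} [Field K] [LieAlgebra K L]
    [LieRing.IsNilpotent L] {x y : L} {a : K} (h : ⁅y, x⁆ = a • x) (hx : x ≠ 0) : a = 0 :=
  IsNilpotent.eq_zero <|
    (Module.End.hasEigenvalue_of_hasEigenvector ⟨Module.End.mem_eigenspace_iff.2 h, hx⟩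
      ).isNilpotent_of_isNilpotent (isNilpotent_toEnd_of_isNilpotent K L L y)

theorem LieAlgebra.mem_center_of_forall_lie_eq_smul {K : Type*} [Field K] [LieAlgebra K L]
    [LieRing.IsNilpotent L] {c : L} (h : ∀ x y : L, ∃ r : K, ⁅x, y⁆ = r • c) :
    c ∈ center K L := by
  rw [mem_maxTrivSubmodule]
  intro x
  obtain ⟨r, hr⟩ := h x c
  by_cases hc : c = 0
  · rw [hc, lie_zero]
  · rw [hr, eq_zero_of_lie_eq_smul hr hc, zero_smul]

theorem LieAlgebra.exists_lie_eq_smul_lie_of_sub_mem_center {R : Type*} [CommRing R]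
    [LieAlgebra R L] {a b : L} (h : ∀ x : L, ∃ s t : R, x - (s • a + t • b) ∈ center R L)
    (x y : L) : ∃ r : R, ⁅x, y⁆ = r • ⁅a, b⁆ := by
  obtain ⟨s, t, p, hp, rfl⟩ : ∃ s t : R, ∃ p ∈ center R L, x = s • a + t • b + p :=
    let ⟨s, t, hx⟩ := h x; ⟨s, t, _, hx, by abel⟩
  obtain ⟨s', t', q, hq, rfl⟩ : ∃ s t : R, ∃ q ∈ center R L, y = s • a + t • b + q :=
    let ⟨s, t, hy⟩ := h y; ⟨s, t, _, hy, by abel⟩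
  rw [mem_maxTrivSubmodule] at hp hq
  have hp' (z : L) : ⁅p, z⁆ = 0 := by rw [← lie_skew, hp, neg_zero]
  refine ⟨s * t' - t * s', ?_⟩
  simp only [add_lie, lie_add, smul_lie, lie_smul, lie_self, hq, hp', ← lie_skew b a]
  module

end LieAlgebra

section ComplexStructureOnLieAlgebra

open Module LinearMap LieAlgebra LieModule

variable {L : Type*} [LieRing L] [LieAlgebra ℝ L] {J : End ℝ L}

theorem IsComplexStructure.commute_ad_apply_of_mem_center (hJ : IsComplexStructure J) {z : L}
    (hz : z ∈ center ℝ L) : Commute (ad ℝ L (J z)) J := by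
  rw [mem_maxTrivSubmodule] at hz
  ext x
  have h := hJ.2 x z
  rw [hz, hz, map_zero, sub_zero, sub_zero, sub_eq_zero] at h
  simp only [End.mul_apply, ad_apply]
  rw [← lie_skew, h, ← map_neg, lie_skew]

theorem IsComplexStructure.apply_mem_center [LieRing.IsNilpotent L] (hdim : finrank ℝ L = 4)
    (hJ : IsComplexStructure J) {z : L} (hz : z ∈ center ℝ L) : J z ∈ center ℝ L := by
  by_contra hJz
  have hf0 : ad ℝ L (J z) ≠ 0 := fun h => hJz <| (mem_maxTrivSubmodule ..).2 fun y => by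
    rw [← lie_skew, ← ad_apply ℝ, h, LinearMap.zero_apply, neg_zero]
  obtain ⟨v, hv⟩ : J z ∈ range (ad ℝ L (J z)) :=
    ker_le_range_of_isNilpotent_of_commute hdim hJ.1
      (isNilpotent_toEnd_of_isNilpotent ℝ L L (J z)) hf0 (hJ.commute_ad_apply_of_mem_center hz)
      (lie_self (J z))
  have hJz0 : J z ≠ 0 := fun h => hJz (h ▸ (center ℝ L).zero_mem)
  rw [ad_apply] at hv
  exact one_ne_zero <| eq_zero_of_lie_eq_smul (K := ℝ) (y := -v)
    (by rw [neg_lie, ← lie_skew, neg_neg, hv, one_smul]) hJz0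

theorem IsComplexStructure.lie_apply_apply_of_forall_lie_eq_smul (hJ : IsComplexStructure J)
    {c : L} (hc : c ≠ 0) (h : ∀ x y : L, ∃ r : ℝ, ⁅x, y⁆ = r • c) (x y : L) :
    ⁅J x, J y⁆ = ⁅x, y⁆ := by
  obtain ⟨r₁, h₁⟩ := h (J x) (J y)
  obtain ⟨r₂, h₂⟩ := h x y
  obtain ⟨r₃, h₃⟩ := h (J x) y
  obtain ⟨r₄, h₄⟩ := h x (J y)
  have hN := hJ.2 x y
  rw [h₁, h₂, h₃, h₄, map_smul, map_smul] at hN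
  obtain ⟨h₁₂, -⟩ := LinearIndependent.pair_iff.1 (linearIndependent_pair_apply hJ.1 hc)
    (r₁ - r₂) (-(r₃ + r₄)) (by linear_combination (norm := module) hN)
  rw [h₁, h₂, sub_eq_zero.1 h₁₂]

theorem isRxH3_of_lie_mem_center (hdim : finrank ℝ L = 4) (hJ : ∀ x, J (J x) = -x)
    (hZ : (center ℝ L).toSubmodule ∈ J.invtSubmodule) {u : L} (hu : u ∉ center ℝ L)
    (hc : ⁅u, J u⁆ ∈ center ℝ L) (hc0 : ⁅u, J u⁆ ≠ 0) : IsRxH3 L := by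
  obtain ⟨b, hb⟩ := exists_basis_of_mem_invtSubmodule hdim hJ hZ hc hc0 hu
  have hJc : J ⁅u, J u⁆ ∈ center ℝ L := hZ hc
  rw [mem_maxTrivSubmodule] at hc hJc
  refine ⟨b, ?_, ?_, ?_, ?_, ?_, ?_⟩ <;> simp only [hb, Matrix.cons_val] <;> simp [hc, hJc]

end ComplexStructureOnLieAlgebra

/-- A non-abelian nilpotent four-dimensional Kähler Lie algebra is isomorphic
to ℝ×h₃ and the complex structure is abelian. -/
theorem nilpotent_kahler_classification
    {L : Type*} [LieRing L] [LieAlgebra ℝ L] [LieRing.IsNilpotent L]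
    (hdim : Module.finrank ℝ L = 4)
    (hnab : ¬ ∀ x y : L, ⁅x, y⁆ = 0)
    (J : Module.End ℝ L) (ω : L →ₗ[ℝ] L →ₗ[ℝ] ℝ)
    (hK : IsKahlerStructure J ω) :
    IsRxH3 L ∧ ∀ x y : L, ⁅J x, J y⁆ = ⁅x, y⁆ := by
  have hJ : IsComplexStructure J := hK.1
  have : Nontrivial L := Module.nontrivial_of_finrank_pos (R := ℝ) (by omega)
  have hZ : (LieAlgebra.center ℝ L).toSubmodule ∈ J.invtSubmodule :=
    fun _ hz => hJ.apply_mem_center hdim hz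
  have hZ0 : (LieAlgebra.center ℝ L).toSubmodule ≠ ⊥ :=
    Submodule.nontrivial_iff_ne_bot.1 <| LieAlgebra.non_trivial_center_of_isNilpotent (R := ℝ)
  obtain ⟨u, hu⟩ : ∃ u, u ∉ LieAlgebra.center ℝ L := by
    push Not at hnab
    obtain ⟨x, u, hxu⟩ := hnab
    exact ⟨u, fun h => hxu ((LieModule.mem_maxTrivSubmodule ..).1 h x)⟩
  have hbr := LieAlgebra.exists_lie_eq_smul_lie_of_sub_mem_center
    (exists_sub_smul_add_smul_mem hdim hJ.1 hZ hZ0 hu)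
  have hc0 : ⁅u, J u⁆ ≠ 0 := fun h => hnab fun x y => by
    obtain ⟨r, hr⟩ := hbr x y
    rw [hr, h, smul_zero]
  exact ⟨isRxH3_of_lie_mem_center hdim hJ.1 hZ hu
      (LieAlgebra.mem_center_of_forall_lie_eq_smul hbr) hc0,
    hJ.lie_apply_apply_of_forall_lie_eq_smul hc0 hbr⟩
end

section
/- Let A be a finite-dimensional commutative associative real algebra equipped with a nondegenerate symmetric bilinear form B satisfying B(ab,c) = B(a,bc) for all a,b,c ∈ A, and let aff(A) be the real Lie algebra A ⊕ A with bracket [(a,b),(c,d)] = (0, ad − cb). Then the linear map K(a,b) = (b,−a) is a complex structure on aff(A) (and is abelian: [Kx,Ky] = [x,y]), the 2-form ω((a,b),(c,d)) = B(a,d) − B(c,b) is a symplectic structure on aff(A), and ω is compatible with K, so (K, ω) is a Kähler structure on aff(A). -/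
set_option linter.unusedSectionVars false
set_option linter.unnecessarySeqFocus false

/-- The underlying set of the affine Lie algebra aff(A) = A ⊕ A. -/
def AffLie (A : Type*) : Type _ := A × A

namespace AffLie

variable {A : Type*} [CommRing A] [Algebra ℝ A]

instance : AddCommGroup (AffLie A) := inferInstanceAs (AddCommGroup (A × A))
instance : Module ℝ (AffLie A) := inferInstanceAs (Module ℝ (A × A))

/-- Build an element of aff(A) from its two components. -/
def mk' (a b : A) : AffLie A := ((a, b) : A × A)

/-- First component. -/
def fst (p : AffLie A) : A := Prod.fst p

/-- Second component. -/
def snd (p : AffLie A) : A := Prod.snd p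

@[simp] lemma fst_mk (a b : A) : (mk' a b : AffLie A).fst = a := rfl
@[simp] lemma snd_mk (a b : A) : (mk' a b : AffLie A).snd = b := rfl
@[simp] lemma fst_add (p q : AffLie A) : (p + q).fst = p.fst + q.fst := rfl
@[simp] lemma snd_add (p q : AffLie A) : (p + q).snd = p.snd + q.snd := rfl
@[simp] lemma fst_smul (t : ℝ) (p : AffLie A) : (t • p).fst = t • p.fst := rfl
@[simp] lemma snd_smul (t : ℝ) (p : AffLie A) : (t • p).snd = t • p.snd := rfl

@[simp] lemma fst_zero : (0 : AffLie A).fst = 0 := rfl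
@[simp] lemma snd_zero : (0 : AffLie A).snd = 0 := rfl

lemma ext' {p q : AffLie A} (h1 : p.fst = q.fst) (h2 : p.snd = q.snd) : p = q :=
  Prod.ext h1 h2

/-- The Lie ring structure on aff(A): [(a,b),(c,d)] = (0, a d - c b). -/
instance : LieRing (AffLie A) where
  bracket p q := mk' 0 (p.fst * q.snd - q.fst * p.snd)
  add_lie p q r := by
    apply ext' <;> simp <;> ring
  lie_add p q r := by
    apply ext' <;> simp <;> ring
  lie_self p := by
    apply ext' <;> simp
  leibniz_lie p q r := by
    apply ext' <;> simp <;> ring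

@[simp] lemma fst_bracket (p q : AffLie A) : (⁅p, q⁆ : AffLie A).fst = 0 := rfl
@[simp] lemma snd_bracket (p q : AffLie A) :
    (⁅p, q⁆ : AffLie A).snd = p.fst * q.snd - q.fst * p.snd := rfl

instance : LieAlgebra ℝ (AffLie A) where
  lie_smul t p q := by
    apply ext' <;> simp [mul_smul_comm, smul_mul_assoc, smul_sub]

end AffLie

namespace AffLie
variable {A : Type*} [CommRing A] [Algebra ℝ A]
@[simp] lemma fst_neg (p : AffLie A) : (-p).fst = -p.fst := rfl
@[simp] lemma snd_neg (p : AffLie A) : (-p).snd = -p.snd := rfl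
@[simp] lemma fst_sub (p q : AffLie A) : (p - q).fst = p.fst - q.fst := rfl
@[simp] lemma snd_sub (p q : AffLie A) : (p - q).snd = p.snd - q.snd := rfl
end AffLie

/-- For a finite-dimensional commutative associative real algebra A with a
nondegenerate symmetric associative bilinear form B, the map K(a,b) = (b,-a) is an abelian
complex structure on aff(A), ω((a,b),(c,d)) = B(a,d) - B(c,b) is a symplectic structure,
and (K,ω) is a Kähler structure (i.e. ω is compatible with K). -/

theorem affLie_kahler_structure
    {A : Type*} [CommRing A] [Algebra ℝ A] [Module.Finite ℝ A]
    (B : A →ₗ[ℝ] A →ₗ[ℝ] ℝ)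
    (hBsymm : ∀ a b : A, B a b = B b a)
    (hBnd : ∀ a : A, (∀ b : A, B a b = 0) → a = 0)
    (hBassoc : ∀ a b c : A, B (a * b) c = B a (b * c)) :
    ∃ (K : Module.End ℝ (AffLie A)) (ω : AffLie A →ₗ[ℝ] AffLie A →ₗ[ℝ] ℝ),
      (∀ p : AffLie A, K p = AffLie.mk' p.snd (-p.fst)) ∧
      (∀ p q : AffLie A, ω p q = B p.fst q.snd - B q.fst p.snd) ∧
      IsComplexStructure K ∧
      (∀ p q : AffLie A, ⁅K p, K q⁆ = ⁅p, q⁆) ∧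
      IsSymplecticForm ω ∧
      (∀ p q : AffLie A, ω (K p) (K q) = ω p q) := by
  have swap : ∀ a b c : A, B a (b * c) = B b (a * c) := by
    intro a b c
    rw [← hBassoc, mul_comm a b, hBassoc]
  refine ⟨{ toFun := fun p => AffLie.mk' p.snd (-p.fst),
            map_add' := by intro p q; apply AffLie.ext' <;> simp <;> ring,
            map_smul' := by intro t p; apply AffLie.ext' <;> simp },
          LinearMap.mk₂ ℝ (fun p q => B p.fst q.snd - B q.fst p.snd)
            (by intro p q r; simp; ring)
            (by intro t p q; simp; ring)
            (by intro p q r; simp; ring)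
            (by intro t p q; simp; ring), ?_, ?_, ?_, ?_, ?_, ?_⟩
  · intro p; rfl
  · intro p q; rfl
  · constructor
    · intro x
      apply AffLie.ext' <;> simp
    · intro x y
      apply AffLie.ext' <;> simp <;> ring
  · intro p q
    apply AffLie.ext' <;> simp <;> ring
  · refine ⟨?_, ?_, ?_⟩
    · intro x; simp
    · intro x hx
      apply AffLie.ext'
      · simp only [AffLie.fst_zero]
        apply hBnd; intro b
        have := hx (AffLie.mk' 0 b); simpa using this
      · simp only [AffLie.snd_zero]
        apply hBnd; intro b
        have := hx (AffLie.mk' (-b) 0)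
        simp at this
        rw [hBsymm]; exact this
    · intro x y z
      simp
      linear_combination swap x.fst z.fst y.snd + swap z.fst y.fst x.snd
        - swap y.fst x.fst z.snd - 2 * swap x.fst y.fst z.snd
  · intro p q
    simp
    rw [hBsymm p.snd q.fst, hBsymm q.snd p.fst]
    ring
end

section
/- Let g = aff(ℂ) be the four-dimensional real Lie algebra with basis e₁,e₂,e₃,e₄ and nonzero brackets [e₁,e₃]=e₃, [e₁,e₄]=e₄, [e₂,e₃]=e₄, [e₂,e₄]=−e₃, and let J be the complex structure determined by Je₁ = e₂, Je₂ = −e₁, Je₃ = e₄, Je₄ = −e₃ (the complex structure satisfying J[x,y] = [Jx,y], which makes (g,J) a complex Lie algebra). Then every closed 2-form Ω on g satisfying Ω(Jx,Jy) = Ω(x,y) for all x,y is degenerate; in particular there is no symplectic structure on g compatible with J. -/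
/-! If `J` is a bi-invariant complex structure (`J ⁅x, y⁆ = ⁅J x, y⁆`), comparing the
closedness identity at `(x, y, z)` with the one at `(J x, J y, z)` shows that a closed
`J`-invariant 2-form vanishes on `[𝔤, 𝔤]`. For `aff(ℂ)` this kills `e₃ = ⁅e₁, e₃⁆`. -/

section BiInvariant

variable {K L : Type*} [Field K] [LieRing L] [LieAlgebra K L] {J : Module.End K L}

theorem lie_apply_eq_apply_lie_of_bi_invariant (hJ : ∀ x y : L, J ⁅x, y⁆ = ⁅J x, y⁆)
    (x y : L) :
    ⁅x, J y⁆ = J ⁅x, y⁆ := by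
  rw [← lie_skew, ← hJ, ← map_neg, lie_skew]

theorem lie_apply_apply_eq_neg_lie_of_bi_invariant (hJJ : ∀ x, J (J x) = -x)
    (hJ : ∀ x y : L, J ⁅x, y⁆ = ⁅J x, y⁆) (x y : L) :
    ⁅J x, J y⁆ = -⁅x, y⁆ := by
  rw [← hJ, lie_apply_eq_apply_lie_of_bi_invariant hJ, hJJ]

theorem closed_form_apply_lie_eq_zero_of_bi_invariant [NeZero (2 : K)] (hJJ : ∀ x, J (J x) = -x)
    (hJ : ∀ x y : L, J ⁅x, y⁆ = ⁅J x, y⁆) (Ω : L →ₗ[K] L →ₗ[K] K)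
    (hclosed : ∀ x y z : L, Ω ⁅x, y⁆ z + Ω ⁅y, z⁆ x + Ω ⁅z, x⁆ y = 0)
    (hcompat : ∀ x y : L, Ω (J x) (J y) = Ω x y) (x y z : L) :
    Ω ⁅x, y⁆ z = 0 := by
  have hclosedJ := hclosed (J x) (J y) z
  rw [lie_apply_apply_eq_neg_lie_of_bi_invariant hJJ hJ, ← hJ,
    lie_apply_eq_apply_lie_of_bi_invariant hJ, hcompat, hcompat, map_neg,
    LinearMap.neg_apply] at hclosedJ
  have h2 : (2 : K) * Ω ⁅x, y⁆ z = 0 := by linear_combination hclosed x y z - hclosedJ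
  exact (mul_eq_zero.mp h2).resolve_left two_ne_zero

end BiInvariant

section AffC

variable {L : Type*} [LieRing L] [LieAlgebra ℝ L] (b : Module.Basis (Fin 4) ℝ L)
  {J : Module.End ℝ L}

theorem affC_J_sq (hJ0 : J (b 0) = b 1) (hJ1 : J (b 1) = -b 0)
    (hJ2 : J (b 2) = b 3) (hJ3 : J (b 3) = -b 2) (x : L) :
    J (J x) = -x := by
  have h : J ∘ₗ J = -LinearMap.id := by
    refine b.ext fun i => ?_
    fin_cases i <;> simp [hJ0, hJ1, hJ2, hJ3]
  exact LinearMap.congr_fun h x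

theorem affC_J_bi_invariant
    (h01 : ⁅b 0, b 1⁆ = 0) (h02 : ⁅b 0, b 2⁆ = b 2) (h03 : ⁅b 0, b 3⁆ = b 3)
    (h12 : ⁅b 1, b 2⁆ = b 3) (h13 : ⁅b 1, b 3⁆ = -b 2) (h23 : ⁅b 2, b 3⁆ = 0)
    (hJ0 : J (b 0) = b 1) (hJ1 : J (b 1) = -b 0)
    (hJ2 : J (b 2) = b 3) (hJ3 : J (b 3) = -b 2) (x y : L) :
    J ⁅x, y⁆ = ⁅J x, y⁆ := by
  let ad : L →ₗ[ℝ] L →ₗ[ℝ] L := LieAlgebra.ad ℝ L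
  have h : ad.compr₂ J = ad ∘ₗ J := by
    refine LinearMap.ext_basis b b fun i j => ?_
    fin_cases i <;> fin_cases j <;>
      simp [ad, ← lie_skew (b 1) (b 0), ← lie_skew (b 2) (b 0), ← lie_skew (b 3) (b 0),
        ← lie_skew (b 2) (b 1), ← lie_skew (b 3) (b 1), ← lie_skew (b 3) (b 2),
        h01, h02, h03, h12, h13, h23, hJ0, hJ1, hJ2, hJ3]
  exact LinearMap.congr_fun₂ h x y

end AffC

theorem affC_complex_structure_no_symplectic_general
    {L : Type*} [LieRing L] [LieAlgebra ℝ L]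
    (b : Module.Basis (Fin 4) ℝ L)
    (h01 : ⁅b 0, b 1⁆ = 0) (h02 : ⁅b 0, b 2⁆ = b 2) (h03 : ⁅b 0, b 3⁆ = b 3)
    (h12 : ⁅b 1, b 2⁆ = b 3) (h13 : ⁅b 1, b 3⁆ = -b 2) (h23 : ⁅b 2, b 3⁆ = 0)
    (J : Module.End ℝ L)
    (hJ0 : J (b 0) = b 1) (hJ1 : J (b 1) = -b 0)
    (hJ2 : J (b 2) = b 3) (hJ3 : J (b 3) = -b 2)
    (Ω : L →ₗ[ℝ] L →ₗ[ℝ] ℝ)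
    (hclosed : ∀ x y z : L, Ω ⁅x, y⁆ z + Ω ⁅y, z⁆ x + Ω ⁅z, x⁆ y = 0)
    (hcompat : ∀ x y : L, Ω (J x) (J y) = Ω x y) :
    ∃ x : L, x ≠ 0 ∧ ∀ y : L, Ω x y = 0 := by
  have hJJ := affC_J_sq b hJ0 hJ1 hJ2 hJ3
  have hJ := affC_J_bi_invariant b h01 h02 h03 h12 h13 h23 hJ0 hJ1 hJ2 hJ3
  refine ⟨b 2, b.ne_zero 2, fun y => ?_⟩
  rw [← h02]
  exact closed_form_apply_lie_eq_zero_of_bi_invariant hJJ hJ Ω hclosed hcompat _ _ y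

/-- On aff(ℂ) with the bi-invariant complex structure J (Je₁=e₂, Je₃=e₄),
every closed J-compatible 2-form is degenerate. -/
theorem affC_complex_structure_no_symplectic
    {L : Type*} [LieRing L] [LieAlgebra ℝ L]
    (b : Module.Basis (Fin 4) ℝ L)
    (h01 : ⁅b 0, b 1⁆ = 0) (h02 : ⁅b 0, b 2⁆ = b 2) (h03 : ⁅b 0, b 3⁆ = b 3)
    (h12 : ⁅b 1, b 2⁆ = b 3) (h13 : ⁅b 1, b 3⁆ = -b 2) (h23 : ⁅b 2, b 3⁆ = 0)
    (J : Module.End ℝ L)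
    (hJ0 : J (b 0) = b 1) (hJ1 : J (b 1) = -b 0)
    (hJ2 : J (b 2) = b 3) (hJ3 : J (b 3) = -b 2)
    (Ω : L →ₗ[ℝ] L →ₗ[ℝ] ℝ)
    (halt : ∀ x : L, Ω x x = 0)
    (hclosed : ∀ x y z : L, Ω ⁅x, y⁆ z + Ω ⁅y, z⁆ x + Ω ⁅z, x⁆ y = 0)
    (hcompat : ∀ x y : L, Ω (J x) (J y) = Ω x y) :
    ∃ x : L, x ≠ 0 ∧ ∀ y : L, Ω x y = 0 :=
  affC_complex_structure_no_symplectic_general b h01 h02 h03 h12 h13 h23 J hJ0 hJ1 hJ2 hJ3 Ω hclosed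
    hcompat
end
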